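/- Let A be a finite-dimensional semisimple superalgebra with decomposition A = ⊕_{i∈I} A_i into simple components, and h a finite-order automorphism of A (which permutes the components). Then the space of h-supersymmetric functions on A decomposes as F_h(A) = ⊕_{i∈J} F_h(A_i), where J ⊆ I is the set of indices of h-invariant simple components; in particular every h-supersymmetric function vanishes on simple components not fixed by h. -/

import Mathlib

/-!
For a central even `z`, supersymmetry gives `f (h z * w) = f (z * w)`. Indeed, if `z` and `w` are
homogeneous `h`-eigenvectors with eigenvalues `μ` and `ν`, then either `μ ν ≠ 1` and `f` kills
`z * w` (pair it with `1`), or `f (z * w) = μ⁻¹ f (w * z) = μ⁻¹ f (z * w)`. Since `h` has finite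
order and commutes with the parity, such `w` span the algebra and such `z` span the `h`-stable
space of central even elements, so the identity holds for all `z` and `w`. For the unit
`e` of a component `A i` with `π i ≠ i`, the element `h e` lies in the component `π i` and
annihilates `A i`, so `f a = f (e * a) = f (h e * a) = 0` for `a ∈ A i`.
-/

namespace Module.End

open Polynomial Submodule

variable {K V : Type*} [Field K] [AddCommGroup V] [Module K V]

theorem isSemisimple_of_pow_eq_one {T : End K V} {N : ℕ} (hN : (N : K) ≠ 0) (hT : T ^ N = 1) :
    T.IsSemisimple :=
  isSemisimple_of_squarefree_aeval_eq_zero (separable_X_pow_sub_C 1 hN one_ne_zero).squarefree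
    (by simp [hT])

theorem eq_one_or_eq_neg_one_of_sq_eq_one {S : End K V} (hS : S ^ 2 = 1) {v : V} (hv : v ≠ 0)
    {μ : K} (hSv : S v = μ • v) : μ = 1 ∨ μ = -1 := by
  have h : (μ ^ 2) • v = (1 : K) • v := by
    rw [one_smul, sq, mul_smul, ← hSv, ← map_smul, ← hSv, ← mul_apply, ← sq, hS, one_apply]
  exact sq_eq_one_iff.mp (smul_left_injective K hv h)

variable [IsAlgClosed K] [FiniteDimensional K V]

theorem le_span_eigenvectors_of_pow_eq_one {T : End K V} {N : ℕ} (hN : (N : K) ≠ 0)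
    (hT : T ^ N = 1) {p : Submodule K V} (hp : p ∈ T.invtSubmodule) :
    p ≤ span K {v | v ∈ p ∧ ∃ μ : K, T v = μ • v} := by
  have hdiag := ((isSemisimple_of_pow_eq_one hN hT).restrict hp).iSup_eigenspace_eq_top
  calc p = map p.subtype ⊤ := by rw [Submodule.map_top, range_subtype]
    _ = ⨆ μ, map p.subtype (eigenspace (T.restrict hp) μ) := by rw [← hdiag, Submodule.map_iSup]
    _ ≤ _ := iSup_le fun μ => by
      rintro _ ⟨w, hw, rfl⟩
      refine subset_span ⟨w.2, μ, ?_⟩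
      exact congrArg Subtype.val (mem_eigenspace_iff.mp hw)

theorem top_le_span_common_eigenvectors_of_pow_eq_one {S T : End K V} {M N : ℕ}
    (hM : (M : K) ≠ 0) (hS : S ^ M = 1) (hN : (N : K) ≠ 0) (hT : T ^ N = 1)
    (hST : Commute S T) :
    ⊤ ≤ span K {v | (∃ μ : K, S v = μ • v) ∧ ∃ μ : K, T v = μ • v} := by
  refine (le_span_eigenvectors_of_pow_eq_one hM hS (p := ⊤) fun _ _ => mem_top).trans
    (span_le.mpr ?_)
  rintro v ⟨-, μ, hv⟩
  have hinv : S.eigenspace μ ∈ T.invtSubmodule := mapsTo_genEigenspace_of_comm hST μ 1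
  refine span_mono ?_ (le_span_eigenvectors_of_pow_eq_one hN hT hinv (mem_eigenspace_iff.mpr hv))
  rintro w ⟨hw, hTw⟩
  exact ⟨⟨μ, mem_eigenspace_iff.mp hw⟩, hTw⟩

end Module.End

section

variable {K B : Type*} [Field K] [Ring B] [Algebra K B]

def IsHSupersymmetric [DecidableEq K] (S h : B ≃ₐ[K] B) (f : B →ₗ[K] K) : Prop :=
  ∀ (a b : B) (pa pb : Bool) (la lb : K),
    S a = (if pa then -a else a) → S b = (if pb then -b else b) →
    h a = la • a → h b = lb • b →
    f (a * b) = (if la * lb = 1 then 1 else 0) * (if pa && pb then (-1 : K) else 1) * la⁻¹ *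
      f (b * a)

namespace IsHSupersymmetric

open Submodule

variable [DecidableEq K] {S h : B ≃ₐ[K] B} {f : B →ₗ[K] K}

theorem apply_eq_zero_of_eigenvalue_ne_one (hf : IsHSupersymmetric S h f) {v : B} {p : Bool}
    {μ : K} (hSv : S v = if p then -v else v) (hhv : h v = μ • v) (hμ : μ ≠ 1) : f v = 0 := by
  simpa [hμ] using hf v 1 p false μ 1 hSv (by simp) hhv (by simp)

theorem apply_map_mul_eq_of_homogeneous_eigenvectors (hf : IsHSupersymmetric S h f) {z w : B}
    (hz : z ∈ Subalgebra.center K B) (hSz : S z = z) {μ : K} (hhz : h z = μ • z) {p : Bool}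
    (hSw : S w = if p then -w else w) {ν : K} (hhw : h w = ν • w) :
    f (h z * w) = f (z * w) := by
  rw [hhz, smul_mul_assoc, map_smul, smul_eq_mul]
  by_cases hμν : μ * ν = 1
  · have hsymm := hf z w false p μ ν (by simp [hSz]) hSw hhz hhw
    rw [if_pos hμν, Subalgebra.mem_center_iff.mp hz w] at hsymm
    have hμ : μ ≠ 0 := left_ne_zero_of_mul_eq_one hμν
    simp only [one_mul, Bool.false_and, Bool.false_eq_true, if_false] at hsymm
    calc μ * f (z * w) = μ * (μ⁻¹ * f (z * w)) := by rw [← hsymm]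
      _ = f (z * w) := mul_inv_cancel_left₀ hμ _
  · have hSzw : S (z * w) = if p then -(z * w) else z * w := by
      rw [map_mul, hSz, hSw]; cases p <;> simp
    have hhzw : h (z * w) = (μ * ν) • (z * w) := by rw [map_mul, hhz, hhw, smul_mul_smul_comm]
    rw [hf.apply_eq_zero_of_eigenvalue_ne_one hSzw hhzw hμν, mul_zero]

variable [IsAlgClosed K] [CharZero K] [FiniteDimensional K B]

theorem apply_map_mul_eq_of_eigenvector (hf : IsHSupersymmetric S h f) (hS : S ^ 2 = 1)
    (hSh : Commute S h) {N : ℕ} (hN : N ≠ 0) (hh : h ^ N = 1) {z : B}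
    (hz : z ∈ Subalgebra.center K B) (hSz : S z = z) {μ : K} (hhz : h z = μ • z) (w : B) :
    f (h z * w) = f (z * w) := by
  have hS' : S.toLinearMap ^ 2 = 1 := by rw [← AlgEquiv.pow_toLinearMap, hS]; rfl
  have hh' : h.toLinearMap ^ N = 1 := by rw [← AlgEquiv.pow_toLinearMap, hh]; rfl
  have hw := Module.End.top_le_span_common_eigenvectors_of_pow_eq_one two_ne_zero hS'
    (Nat.cast_ne_zero.mpr hN) hh' (hSh.map (AlgEquiv.toLinearMapHom K B)) (mem_top (x := w))
  induction hw using Submodule.span_induction with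
  | mem w hw =>
    obtain ⟨⟨μS, hSw⟩, ν, hhw⟩ := hw
    rcases eq_or_ne w 0 with rfl | hw0
    · simp
    rcases Module.End.eq_one_or_eq_neg_one_of_sq_eq_one hS' hw0 hSw with rfl | rfl
    · exact hf.apply_map_mul_eq_of_homogeneous_eigenvectors hz hSz hhz (p := false)
        (by simpa using hSw) hhw
    · exact hf.apply_map_mul_eq_of_homogeneous_eigenvectors hz hSz hhz (p := true)
        (by simpa using hSw) hhw
  | zero => simp
  | add x y _ _ hx hy => simp only [mul_add, map_add, hx, hy]
  | smul c x _ hx => simp only [mul_smul_comm, map_smul, hx]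

theorem apply_map_mul_eq (hf : IsHSupersymmetric S h f) (hS : S ^ 2 = 1)
    (hSh : Commute S h) {N : ℕ} (hN : N ≠ 0) (hh : h ^ N = 1) {z : B}
    (hz : z ∈ Subalgebra.center K B) (hSz : S z = z) (w : B) :
    f (h z * w) = f (z * w) := by
  let Z : Submodule K B :=
    (Subalgebra.center K B).toSubmodule ⊓ Module.End.eigenspace S.toLinearMap 1
  have hZ : Z ∈ Module.End.invtSubmodule h.toLinearMap := by
    intro y hy
    obtain ⟨hyc, hyS⟩ := Submodule.mem_inf.mp hy
    refine Submodule.mem_inf.mpr ⟨Subalgebra.mem_center_iff (R := K).mpr fun b => ?_, ?_⟩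
    · simpa using congrArg h ((Subalgebra.mem_center_iff (R := K)).mp hyc (h.symm b))
    · have hSy : S y = y := by simpa using hyS
      rw [Module.End.mem_eigenspace_iff, one_smul]
      change S (h y) = h y
      rw [← AlgEquiv.mul_apply, hSh.eq, AlgEquiv.mul_apply, hSy]
  have hh' : h.toLinearMap ^ N = 1 := by rw [← AlgEquiv.pow_toLinearMap, hh]; rfl
  have hzZ := Module.End.le_span_eigenvectors_of_pow_eq_one (Nat.cast_ne_zero.mpr hN) hh' hZ
    (Submodule.mem_inf.mpr ⟨hz, by simpa using hSz⟩)
  clear hz hSz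
  induction hzZ using Submodule.span_induction with
  | mem z hz =>
    obtain ⟨hzZ, μ, hhz⟩ := hz
    obtain ⟨hzc, hzS⟩ := Submodule.mem_inf.mp hzZ
    exact hf.apply_map_mul_eq_of_eigenvector hS hSh hN hh hzc (by simpa using hzS) hhz w
  | zero => simp
  | add x y _ _ hx hy => simp only [add_mul, map_add, hx, hy]
  | smul c x _ hx => simp only [smul_mul_assoc, map_smul, hx]

end IsHSupersymmetric

end

theorem hsupersymmetric_decomposition_semisimple_general
    (I : Type*) [Fintype I] [DecidableEq I]
    (A : I → Type*) [∀ i, Ring (A i)] [∀ i, Algebra ℂ (A i)]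
    [∀ i, FiniteDimensional ℂ (A i)]
    (σ : ∀ i, A i ≃ₐ[ℂ] A i) (hσ2 : ∀ i a, σ i (σ i a) = a)
    (h : (∀ i, A i) ≃ₐ[ℂ] (∀ i, A i))
    (hEven : ∀ (a : ∀ i, A i) (i : I), h (fun j => σ j (a j)) i = σ i (h a i))
    (hOrd : ∃ N : ℕ, 0 < N ∧ ∀ a, (h ^ N) a = a)
    (π : Equiv.Perm I)
    (hπ : ∀ (i j : I) (a : A i), j ≠ π i → h (Pi.single i a) j = 0)
    (f : (∀ i, A i) →ₗ[ℂ] ℂ)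
    (hf : ∀ (a b : ∀ i, A i) (pa pb : Bool) (la lb : ℂ),
      ((fun j => σ j (a j)) = (if pa then -a else a)) →
      ((fun j => σ j (b j)) = (if pb then -b else b)) →
      h a = la • a → h b = lb • b →
      f (a * b) = (if la * lb = 1 then 1 else 0) *
        (if pa && pb then (-1 : ℂ) else 1) * la⁻¹ * f (b * a)) :
    (∀ i, π i ≠ i → ∀ a : A i, f (Pi.single i a) = 0) ∧
    (∀ a, f a = ∑ i ∈ Finset.univ.filter (fun i => π i = i), f (Pi.single i (a i))) := by
  obtain ⟨N, hN, hh⟩ := hOrd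
  let S := AlgEquiv.piCongrRight σ
  have hf' : IsHSupersymmetric S h f := hf
  have hS : S ^ 2 = 1 := AlgEquiv.ext fun a => funext fun i => hσ2 i (a i)
  have hSh : Commute S h := AlgEquiv.ext fun a => funext fun i => (hEven a i).symm
  have vanish (i : I) (hi : π i ≠ i) (a : A i) : f (Pi.single i a) = 0 := by
    have he_center : Pi.single i (1 : A i) ∈ Subalgebra.center ℂ (∀ i, A i) :=
      Subalgebra.mem_center_iff.mpr fun b => by
        rw [← Pi.single_mul_right, ← Pi.single_mul_left, mul_one, one_mul]
    have he_even : S (Pi.single i 1) = Pi.single i 1 := by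
      funext j
      rcases eq_or_ne j i with rfl | hj
      · simp [S]
      · simp [S, hj]
    have hhe : h (Pi.single i 1) * Pi.single i a = 0 := by
      funext j
      rcases eq_or_ne j i with rfl | hj
      · simp [hπ j j 1 hi.symm]
      · simp [hj]
    calc f (Pi.single i a) = f (Pi.single i 1 * Pi.single i a) := by rw [← Pi.single_mul, one_mul]
      _ = f (h (Pi.single i 1) * Pi.single i a) :=
        (hf'.apply_map_mul_eq hS hSh hN.ne' (AlgEquiv.ext hh) he_center he_even _).symm
      _ = 0 := by rw [hhe, map_zero]
  refine ⟨vanish, fun a => ?_⟩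
  calc f a = ∑ i, f (Pi.single i (a i)) := by rw [← map_sum, Finset.univ_sum_single]
    _ = _ := (Finset.sum_filter_of_ne fun i _ hfi => by_contra fun hi => hfi (vanish i hi _)).symm

/-- Let `A = ⊕ᵢ Aᵢ` be a finite-dimensional semisimple superalgebra, presented as a finite
product of its simple components (each component's grading encoded by a parity involution
`σ i`, simplicity meaning graded two-sided ideals are trivial), and let `h` be a
finite-order (even) automorphism of `A`, permuting the components by the permutation `π`.
Then every `h`-supersymmetric function `f` on `A` vanishes on the simple components not
fixed by `h`, so `f` decomposes as the sum of its restrictions to the `h`-invariant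
components: `F_h(A) = ⊕_{i ∈ J} F_h(Aᵢ)` with `J = {i | π i = i}`. -/
theorem hsupersymmetric_decomposition_semisimple
    (I : Type*) [Fintype I] [DecidableEq I]
    (A : I → Type*) [∀ i, Ring (A i)] [∀ i, Algebra ℂ (A i)]
    [∀ i, FiniteDimensional ℂ (A i)] [∀ i, Nontrivial (A i)]
    (σ : ∀ i, A i ≃ₐ[ℂ] A i) (hσ2 : ∀ i a, σ i (σ i a) = a)
    (hsimple : ∀ i, ∀ J : TwoSidedIdeal (A i), (∀ a ∈ J, σ i a ∈ J) → J = ⊥ ∨ J = ⊤)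
    (h : (∀ i, A i) ≃ₐ[ℂ] (∀ i, A i))
    (hEven : ∀ (a : ∀ i, A i) (i : I), h (fun j => σ j (a j)) i = σ i (h a i))
    (hOrd : ∃ N : ℕ, 0 < N ∧ ∀ a, (h ^ N) a = a)
    (π : Equiv.Perm I)
    (hπ : ∀ (i j : I) (a : A i), j ≠ π i → h (Pi.single i a) j = 0)
    (f : (∀ i, A i) →ₗ[ℂ] ℂ)
    (hf : ∀ (a b : ∀ i, A i) (pa pb : Bool) (la lb : ℂ),
      ((fun j => σ j (a j)) = (if pa then -a else a)) →
      ((fun j => σ j (b j)) = (if pb then -b else b)) →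
      h a = la • a → h b = lb • b →
      f (a * b) = (if la * lb = 1 then 1 else 0) *
        (if pa && pb then (-1 : ℂ) else 1) * la⁻¹ * f (b * a)) :
    (∀ i, π i ≠ i → ∀ a : A i, f (Pi.single i a) = 0) ∧
    (∀ a, f a = ∑ i ∈ Finset.univ.filter (fun i => π i = i), f (Pi.single i (a i))) :=
  hsupersymmetric_decomposition_semisimple_general I A σ hσ2 h hEven hOrd π hπ f hf
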